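/- arXiv:1610.01254 — 5 statements merged into one kernel-verified Lean document; each statement's English description precedes it below -/
import Mathlib

section
/- For every real ε, the following are equivalent: (i) for every q ∈ (−1/2, 1/2), the matrix J_ε(q) has a real eigenvalue of absolute value strictly greater than 1; (ii) ε < 0 or ε > 2/π. (Local instability holds at every point of the phase space exactly in the parameter range ε < 0 or ε > 2/π.) -/
open Real

/-- The Jacobian matrix of the map `T̃_ε` at a point with angle coordinate `q`. -/
noncomputable def Jmat (ε q : ℝ) : Matrix (Fin 2) (Fin 2) ℝ :=
  !![0, 1; -1, 2 - 2 * Real.pi * ε / (Real.cos (Real.pi * q))^2]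

lemma key (t : ℝ) :
    (∃ γ : ℝ, 1 < |γ| ∧ ∃ v : Fin 2 → ℝ, v ≠ 0 ∧
      (!![0, 1; -1, t]).mulVec v = γ • v) ↔ 2 < |t| := by
  constructor
  · rintro ⟨γ, hγ, v, hv, heq⟩
    have h0 := congrFun heq 0
    have h1 := congrFun heq 1
    simp [Matrix.mulVec, dotProduct, Fin.sum_univ_two] at h0 h1
    have hv0 : v 0 ≠ 0 := by
      intro h
      apply hv
      have hv1 : v 1 = 0 := by rw [h0, h, mul_zero]
      funext i
      fin_cases i <;> simp [h, hv1]
    have hq : γ ^ 2 + 1 = t * γ := by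
      have : (γ ^ 2 + 1 - t * γ) * v 0 = 0 := by
        rw [h0] at h1
        ring_nf
        ring_nf at h1
        nlinarith [h1]
      rcases mul_eq_zero.mp this with h | h
      · linarith
      · exact absurd h hv0
    rcases lt_abs.mp hγ with h | h
    · have ht : 2 < t := by nlinarith [sq_nonneg (γ - 1)]
      calc 2 < t := ht
        _ ≤ |t| := le_abs_self t
    · have ht : t < -2 := by nlinarith [sq_nonneg (γ + 1)]
      calc 2 < -t := by linarith
        _ ≤ |t| := neg_le_abs t
  · intro ht
    have h4 : 0 ≤ t ^ 2 - 4 := by nlinarith [sq_abs t]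
    set s := Real.sqrt (t ^ 2 - 4) with hs
    have hs2 : s ^ 2 = t ^ 2 - 4 := Real.sq_sqrt h4
    have hs0 : 0 ≤ s := Real.sqrt_nonneg _
    rcases lt_abs.mp ht with h | h
    · refine ⟨(t + s) / 2, ?_, ![1, (t + s) / 2], ?_, ?_⟩
      · rw [lt_abs]; left; linarith
      · intro hc
        have := congrFun hc 0
        simp at this
      · funext i
        fin_cases i <;>
          simp [Matrix.mulVec, dotProduct, Fin.sum_univ_two] <;> nlinarith
    · refine ⟨(t - s) / 2, ?_, ![1, (t - s) / 2], ?_, ?_⟩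
      · rw [lt_abs]; right; linarith
      · intro hc
        have := congrFun hc 0
        simp at this
      · funext i
        fin_cases i <;>
          simp [Matrix.mulVec, dotProduct, Fin.sum_univ_two] <;> nlinarith

theorem stmt4 (ε : ℝ) :
    (∀ q ∈ Set.Ioo (-(1:ℝ)/2) (1/2), ∃ γ : ℝ, 1 < |γ| ∧
        ∃ v : Fin 2 → ℝ, v ≠ 0 ∧ (Jmat ε q).mulVec v = γ • v) ↔
      (ε < 0 ∨ 2 / Real.pi < ε) := by
  have hπ : (0:ℝ) < Real.pi := Real.pi_pos
  constructor
  · intro h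
    by_contra hc
    push_neg at hc
    obtain ⟨h0, h1⟩ := hc
    have hmem : (0:ℝ) ∈ Set.Ioo (-(1:ℝ)/2) (1/2) := by norm_num
    have hk := h 0 hmem
    rw [Jmat] at hk
    simp only [mul_zero, Real.cos_zero, one_pow, div_one] at hk
    have hT := (key _).mp hk
    have hpe : Real.pi * ε ≤ 2 := by
      have := (le_div_iff₀ hπ).mp h1
      linarith
    have hpe0 : 0 ≤ Real.pi * ε := by positivity
    rcases lt_abs.mp hT with h | h <;> linarith
  · intro h q hq
    obtain ⟨hq1, hq2⟩ := hq
    have hc : 0 < Real.cos (Real.pi * q) := by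
      apply Real.cos_pos_of_mem_Ioo
      constructor
      · show -(Real.pi / 2) < Real.pi * q
        nlinarith
      · show Real.pi * q < Real.pi / 2
        nlinarith
    have hc1 : Real.cos (Real.pi * q) ≤ 1 := Real.cos_le_one _
    set c := Real.cos (Real.pi * q) with hcdef
    have hc2 : 0 < c ^ 2 := by positivity
    have hc3 : c ^ 2 ≤ 1 := by nlinarith
    rw [Jmat, key]
    rcases h with h | h
    · have hneg : 2 * Real.pi * ε / c ^ 2 < 0 := by
        apply div_neg_of_neg_of_pos _ hc2
        nlinarith
      calc 2 < 2 - 2 * Real.pi * ε / c ^ 2 := by linarith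
        _ ≤ |2 - 2 * Real.pi * ε / c ^ 2| := le_abs_self _
    · have h4 : (4:ℝ) < 2 * Real.pi * ε := by
        have := (div_lt_iff₀ hπ).mp h
        nlinarith
      have h5 : (4:ℝ) < 2 * Real.pi * ε / c ^ 2 := by
        rw [lt_div_iff₀ hc2]
        nlinarith
      calc 2 < -(2 - 2 * Real.pi * ε / c ^ 2) := by linarith
        _ ≤ |2 - 2 * Real.pi * ε / c ^ 2| := neg_le_abs _
end

section
/- Let ε ∈ ℝ and q ∈ ℝ with cos(πq) ≠ 0 and set α := 1 − πε/cos²(πq). If |α| > 1, then the eigenvalues of J_ε(q) are γ₊ = α + √(α² − 1) and γ₋ = α − √(α² − 1), their product is 1, and moreover: if α > 1 (which holds for all such q whenever ε < 0) then γ₊ > 1, while if α < −1 (which holds for all such q whenever ε > 2/π) then |γ₋| > 1. -/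
open Real

/-
`Jmat ε q = !![0, 1; -1, 2α]` has trace `2α` and determinant `1`, so it is the companion matrix
of `x² - 2αx + 1`: its eigenvectors are the multiples of `(1, γ)` with `γ` a root, and for
`α² ≥ 1` the roots are `α ± √(α² - 1)`, whose product is `1`. The sign conditions on `α` come
from `0 < cos² (πq) ≤ 1`.
-/

open Matrix

section Companion

variable {R : Type*} [CommRing R]

lemma mulVec_one_cons_eq_smul {t γ : R} (hγ : γ ^ 2 - t * γ + 1 = 0) :
    !![0, 1; -1, t] *ᵥ ![1, γ] = γ • ![1, γ] := by
  ext i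
  fin_cases i
  · simp
  · simpa using by linear_combination -hγ

lemma sq_sub_mul_add_one_eq_zero_of_mulVec_eq_smul [IsDomain R] {t γ : R} {v : Fin 2 → R}
    (hv : v ≠ 0) (h : !![0, 1; -1, t] *ᵥ v = γ • v) : γ ^ 2 - t * γ + 1 = 0 := by
  have h0 : v 1 = γ * v 0 := by simpa [vecHead, vecTail] using congrFun h 0
  have h1 : -v 0 + t * v 1 = γ * v 1 := by simpa [vecHead, vecTail] using congrFun h 1
  have hv0 : v 0 ≠ 0 := by
    intro hz
    exact hv (by ext i; fin_cases i <;> simp [hz, h0])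
  refine (mul_eq_zero.mp ?_).resolve_right hv0
  linear_combination (-1 : R) * h1 + t * h0 - γ * h0

end Companion

lemma sq_sub_two_mul_add_one_eq_zero_iff {a γ : ℝ} (ha : 1 ≤ a ^ 2) :
    γ ^ 2 - 2 * a * γ + 1 = 0 ↔ γ = a + √(a ^ 2 - 1) ∨ γ = a - √(a ^ 2 - 1) := by
  have hfactor : γ ^ 2 - 2 * a * γ + 1 = (γ - (a + √(a ^ 2 - 1))) * (γ - (a - √(a ^ 2 - 1))) := by
    linear_combination Real.sq_sqrt (sub_nonneg.mpr ha)
  rw [hfactor, mul_eq_zero, sub_eq_zero, sub_eq_zero]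

lemma add_sqrt_mul_sub_sqrt {a : ℝ} (ha : 1 ≤ a ^ 2) :
    (a + √(a ^ 2 - 1)) * (a - √(a ^ 2 - 1)) = 1 := by
  linear_combination -Real.sq_sqrt (sub_nonneg.mpr ha)

lemma one_lt_add_sqrt {a : ℝ} (ha : 1 < a) : 1 < a + √(a ^ 2 - 1) := by
  linarith [Real.sqrt_nonneg (a ^ 2 - 1)]

lemma one_lt_abs_sub_sqrt {a : ℝ} (ha : a < -1) : 1 < |a - √(a ^ 2 - 1)| := by
  rw [abs_of_neg (by linarith [Real.sqrt_nonneg (a ^ 2 - 1)])]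
  linarith [Real.sqrt_nonneg (a ^ 2 - 1)]

lemma Jmat_eq (ε q : ℝ) : Jmat ε q = !![0, 1; -1, 2 * (1 - π * ε / cos (π * q) ^ 2)] := by
  rw [Jmat]
  ring_nf

lemma one_lt_one_sub_div_cos_sq {ε q : ℝ} (hq : cos (π * q) ≠ 0) (hε : ε < 0) :
    1 < 1 - π * ε / cos (π * q) ^ 2 := by
  have : π * ε / cos (π * q) ^ 2 < 0 :=
    div_neg_of_neg_of_pos (mul_neg_of_pos_of_neg pi_pos hε) (by positivity)
  linarith

lemma one_sub_div_cos_sq_lt_neg_one {ε q : ℝ} (hq : cos (π * q) ≠ 0) (hε : 2 / π < ε) :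
    1 - π * ε / cos (π * q) ^ 2 < -1 := by
  have hπε : 2 < π * ε := by rwa [div_lt_iff₀' pi_pos] at hε
  have hcos : cos (π * q) ^ 2 ≤ 1 := cos_sq_le_one _
  have : 2 < π * ε / cos (π * q) ^ 2 := by
    rw [lt_div_iff₀ (by positivity)]
    nlinarith
  linarith

theorem stmt5 (ε q : ℝ) (hq : Real.cos (Real.pi * q) ≠ 0)
    (α : ℝ) (hα : α = 1 - Real.pi * ε / (Real.cos (Real.pi * q))^2) (h1 : 1 < |α|) :
    (∃ v : Fin 2 → ℝ, v ≠ 0 ∧ (Jmat ε q).mulVec v = (α + Real.sqrt (α^2 - 1)) • v) ∧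
    (∃ v : Fin 2 → ℝ, v ≠ 0 ∧ (Jmat ε q).mulVec v = (α - Real.sqrt (α^2 - 1)) • v) ∧
    (∀ γ : ℝ, (∃ v : Fin 2 → ℝ, v ≠ 0 ∧ (Jmat ε q).mulVec v = γ • v) →
        γ = α + Real.sqrt (α^2 - 1) ∨ γ = α - Real.sqrt (α^2 - 1)) ∧
    (α + Real.sqrt (α^2 - 1)) * (α - Real.sqrt (α^2 - 1)) = 1 ∧
    (ε < 0 → 1 < α) ∧
    (2 / Real.pi < ε → α < -1) ∧
    (1 < α → 1 < α + Real.sqrt (α^2 - 1)) ∧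
    (α < -1 → 1 < |α - Real.sqrt (α^2 - 1)|) := by
  have hα1 : 1 ≤ α ^ 2 := (one_lt_sq_iff_one_lt_abs α).mpr h1 |>.le
  have hJ : Jmat ε q = !![0, 1; -1, 2 * α] := hα ▸ Jmat_eq ε q
  have eigenvector_of_root : ∀ γ, γ = α + √(α ^ 2 - 1) ∨ γ = α - √(α ^ 2 - 1) →
      ∃ v : Fin 2 → ℝ, v ≠ 0 ∧ (Jmat ε q) *ᵥ v = γ • v := fun γ hγ =>
    ⟨![1, γ], by simp, hJ ▸ mulVec_one_cons_eq_smul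
      ((sq_sub_two_mul_add_one_eq_zero_iff hα1).mpr hγ)⟩
  refine ⟨eigenvector_of_root _ (.inl rfl), eigenvector_of_root _ (.inr rfl), ?_,
    add_sqrt_mul_sub_sqrt hα1, fun hε => hα ▸ one_lt_one_sub_div_cos_sq hq hε,
    fun hε => hα ▸ one_sub_div_cos_sq_lt_neg_one hq hε, one_lt_add_sqrt, one_lt_abs_sub_sqrt⟩
  rintro γ ⟨v, hv, hγ⟩
  rw [hJ] at hγ
  rw [← sq_sub_two_mul_add_one_eq_zero_iff hα1]
  exact sq_sub_mul_add_one_eq_zero_of_mulVec_eq_smul hv hγ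
end

section
/- Forward invariance of the expanding cone for ε < 0: let ε < 0, let q, q' ∈ (−1/2, 1/2), and set α := 1 − πε/cos²(πq) and α' := 1 − πε/cos²(πq'). If a = (a₁, a₂) ∈ ℝ² with a₂ ≠ 0 and a₁/a₂ < α, then the image vector b = J_ε(q)·a = (a₂, −a₁ + 2α·a₂) satisfies b₂ ≠ 0 and 0 < b₁/b₂ < α'. In particular the cone field {a : 0 < a₁/a₂ < α} is mapped into itself along any orbit. -/
open Real

theorem stmt7 (ε : ℝ) (hε : ε < 0) (q q' : ℝ)
    (hq : q ∈ Set.Ioo (-(1:ℝ)/2) (1/2)) (hq' : q' ∈ Set.Ioo (-(1:ℝ)/2) (1/2))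
    (a : Fin 2 → ℝ) (ha : a 1 ≠ 0)
    (hcone : a 0 / a 1 < 1 - Real.pi * ε / (Real.cos (Real.pi * q))^2) :
    (Jmat ε q).mulVec a 1 ≠ 0 ∧
    0 < (Jmat ε q).mulVec a 0 / (Jmat ε q).mulVec a 1 ∧
    (Jmat ε q).mulVec a 0 / (Jmat ε q).mulVec a 1 <
      1 - Real.pi * ε / (Real.cos (Real.pi * q'))^2 := by
  obtain ⟨hq1, hq2⟩ := hq
  obtain ⟨hq1', hq2'⟩ := hq'
  have hpi := Real.pi_pos
  have hc : 0 < Real.cos (Real.pi * q) := by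
    apply Real.cos_pos_of_mem_Ioo
    constructor <;> nlinarith
  have hc' : 0 < Real.cos (Real.pi * q') := by
    apply Real.cos_pos_of_mem_Ioo
    constructor <;> nlinarith
  set c := Real.cos (Real.pi * q) with hcdef
  set c' := Real.cos (Real.pi * q') with hcdef'
  have hneg : Real.pi * ε / c ^ 2 < 0 :=
    div_neg_of_neg_of_pos (mul_neg_of_pos_of_neg hpi hε) (pow_pos hc 2)
  have hneg' : Real.pi * ε / c' ^ 2 < 0 :=
    div_neg_of_neg_of_pos (mul_neg_of_pos_of_neg hpi hε) (pow_pos hc' 2)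
  set t : ℝ := Real.pi * ε / c ^ 2 with htdef
  have h0 : (Jmat ε q).mulVec a 0 = a 1 := by
    simp [Jmat, Matrix.mulVec, dotProduct, Fin.sum_univ_two]
  have h1 : (Jmat ε q).mulVec a 1 = -(a 0) + (2 - 2 * t) * a 1 := by
    rw [htdef]
    simp [Jmat, Matrix.mulVec, dotProduct, Fin.sum_univ_two]
    exact Or.inl (by rw [hcdef]; ring)
  rw [h0, h1]
  rcases lt_or_gt_of_ne ha with hneg1 | hpos1
  · -- a 1 < 0
    have hcone' : a 0 > (1 - t) * a 1 := by
      have := (div_lt_iff_of_neg hneg1).mp hcone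
      linarith
    have hb2 : -(a 0) + (2 - 2 * t) * a 1 < (1 - t) * a 1 := by nlinarith
    have hb2neg : -(a 0) + (2 - 2 * t) * a 1 < 0 := by nlinarith
    refine ⟨ne_of_lt hb2neg, ?_, ?_⟩
    · exact div_pos_of_neg_of_neg hneg1 hb2neg
    · have hlt1 : a 1 / (-(a 0) + (2 - 2 * t) * a 1) < 1 := by
        rw [div_lt_iff_of_neg hb2neg]
        nlinarith
      linarith
  · -- a 1 > 0
    have hcone' : a 0 < (1 - t) * a 1 := by
      have := (div_lt_iff₀ hpos1).mp hcone
      linarith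
    have hb2pos : 0 < -(a 0) + (2 - 2 * t) * a 1 := by nlinarith
    refine ⟨ne_of_gt hb2pos, div_pos hpos1 hb2pos, ?_⟩
    have hlt1 : a 1 / (-(a 0) + (2 - 2 * t) * a 1) < 1 := by
      rw [div_lt_one hb2pos]
      nlinarith
    linarith
end

section
/- Strict expansion in the cone for ε > 2/π: let ε > 2/π, q ∈ (−1/2, 1/2), and α := 1 − πε/cos²(πq). If a = (a₁, a₂) ∈ ℝ² with a₂ ≠ 0 and α < a₁/a₂ < 0, then ‖J_ε(q)·a‖ > ‖a‖, where ‖·‖ is the Euclidean norm on ℝ². -/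
open Real

theorem stmt8 (ε : ℝ) (hε : 2 / Real.pi < ε) (q : ℝ)
    (hq : q ∈ Set.Ioo (-(1:ℝ)/2) (1/2))
    (a : Fin 2 → ℝ) (ha : a 1 ≠ 0)
    (hcone1 : 1 - Real.pi * ε / (Real.cos (Real.pi * q))^2 < a 0 / a 1)
    (hcone2 : a 0 / a 1 < 0) :
    Real.sqrt ((a 0)^2 + (a 1)^2) <
      Real.sqrt (((Jmat ε q).mulVec a 0)^2 + ((Jmat ε q).mulVec a 1)^2) := by
  obtain ⟨hq1, hq2⟩ := hq
  have hπ := Real.pi_pos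
  have hc : 0 < Real.cos (Real.pi * q) := by
    apply Real.cos_pos_of_mem_Ioo
    constructor <;> nlinarith
  set α : ℝ := 1 - Real.pi * ε / (Real.cos (Real.pi * q))^2 with hαdef
  have hc2 : 0 < (Real.cos (Real.pi * q))^2 := by positivity
  have hc2le : (Real.cos (Real.pi * q))^2 ≤ 1 := by
    nlinarith [Real.cos_le_one (Real.pi * q), Real.neg_one_le_cos (Real.pi * q)]
  have hπε : 2 < Real.pi * ε := by
    rw [div_lt_iff₀ hπ] at hε; linarith
  have hα0 : α < 0 := by
    rw [hαdef, sub_neg, lt_div_iff₀ hc2]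
    nlinarith
  have hm0 : (Jmat ε q).mulVec a 0 = a 1 := by
    simp [Jmat, Matrix.mulVec, dotProduct, Fin.sum_univ_two]
  have hm1 : (Jmat ε q).mulVec a 1 = -a 0 + (2 * α) * a 1 := by
    simp [Jmat, Matrix.mulVec, dotProduct, Fin.sum_univ_two, hαdef]
    exact Or.inl (by ring)
  rw [hm0, hm1]
  apply Real.sqrt_lt_sqrt (by positivity)
  have ha2 : 0 < (a 1)^2 := by positivity
  have h1 : 0 < (-α) * (a 0 / a 1 - α) * (a 1)^2 := by
    apply mul_pos (mul_pos (by linarith) (by linarith)) ha2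
  have heq : a 0 / a 1 * a 1 = a 0 := div_mul_cancel₀ _ ha
  have key : (a 0)^2 < (-a 0 + 2 * α * a 1)^2 := by
    rw [← heq]; nlinarith [h1]
  linarith
end

section
/- Strict expansion in the cone for ε < 0: let ε < 0, q ∈ (−1/2, 1/2), and α := 1 − πε/cos²(πq). If a = (a₁, a₂) ∈ ℝ² with a₂ ≠ 0 and 0 < a₁/a₂ < α, then ‖J_ε(q)·a‖ > ‖a‖, where ‖·‖ is the Euclidean norm on ℝ². -/
open Real

theorem stmt9 (ε : ℝ) (hε : ε < 0) (q : ℝ)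
    (hq : q ∈ Set.Ioo (-(1:ℝ)/2) (1/2))
    (a : Fin 2 → ℝ) (ha : a 1 ≠ 0)
    (hcone1 : 0 < a 0 / a 1)
    (hcone2 : a 0 / a 1 < 1 - Real.pi * ε / (Real.cos (Real.pi * q))^2) :
    Real.sqrt ((a 0)^2 + (a 1)^2) <
      Real.sqrt (((Jmat ε q).mulVec a 0)^2 + ((Jmat ε q).mulVec a 1)^2) := by
  obtain ⟨hq1, hq2⟩ := hq
  have hcos : 0 < Real.cos (Real.pi * q) := by
    apply Real.cos_pos_of_mem_Ioo
    constructor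
    · nlinarith [Real.pi_pos]
    · nlinarith [Real.pi_pos]
  have hcos2 : 0 < (Real.cos (Real.pi * q))^2 := by positivity
  set c : ℝ := Real.pi * ε / (Real.cos (Real.pi * q))^2 with hc
  have hcneg : c < 0 := div_neg_of_neg_of_pos (by nlinarith [Real.pi_pos]) hcos2
  have ha2 : 0 < (a 1)^2 := by positivity
  have hkey : a 0 * a 1 < (1 - c) * (a 1)^2 := by
    have := mul_lt_mul_of_pos_right hcone2 ha2
    rw [div_mul_eq_mul_div, pow_two, mul_div_assoc, mul_div_cancel_left₀ _ ha] at this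
    nlinarith [this]
  have hmv0 : (Jmat ε q).mulVec a 0 = a 1 := by
    simp [Jmat, Matrix.mulVec, dotProduct, Fin.sum_univ_two]
  have hmv1 : (Jmat ε q).mulVec a 1 = -(a 0) + (2 - 2 * c) * a 1 := by
    have : (Jmat ε q).mulVec a 1
        = -(a 0) + (2 - 2 * Real.pi * ε / (Real.cos (Real.pi * q))^2) * a 1 := by
      simp [Jmat, Matrix.mulVec, dotProduct, Fin.sum_univ_two]
    rw [this, hc]
    ring
  rw [hmv0, hmv1]
  apply Real.sqrt_lt_sqrt (by positivity)
  nlinarith [mul_pos (by linarith : (0:ℝ) < 1 - c) (by linarith : 0 < (1 - c) * (a 1)^2 - a 0 * a 1)]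
end
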